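/- Let α ∈ (0,1) and let X be an ℕ-valued random variable satisfying the recursive distributional equation. Then for every s ∈ (0,1], ((2−p)s + p)² − 4s·exp(α(s−1)) ≥ 0. -/

import Mathlib

open scoped ENNReal

/-- The Poisson(α) probability mass function on ℕ. -/
noncomputable def poissonPMF (α : ℝ) (k : ℕ) : ℝ≥0∞ :=
  ENNReal.ofReal (Real.exp (-α) * α ^ k / (Nat.factorial k))

/-- The Geometric(1/2) pmf: P(N = k) = (1/2)^(k+1) for k ≥ 0. -/
noncomputable def geomHalf (k : ℕ) : ℝ≥0∞ := (1 / 2) ^ (k + 1)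

/-- The law of (X - 1)⁺ when X has law μ on ℕ. -/
noncomputable def shiftLaw (μ : ℕ → ℝ≥0∞) (k : ℕ) : ℝ≥0∞ :=
  if k = 0 then μ 0 + μ 1 else μ (k + 1)

/-- Convolution of two (sub-)pmfs on ℕ: the law of an independent sum. -/
noncomputable def convAdd (f g : ℕ → ℝ≥0∞) (k : ℕ) : ℝ≥0∞ :=
  ∑ j ∈ Finset.range (k + 1), f j * g (k - j)

/-- n-fold convolution of a pmf on ℕ: the law of a sum of n i.i.d. copies. -/
noncomputable def iterConv (f : ℕ → ℝ≥0∞) : ℕ → ℕ → ℝ≥0∞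
  | 0 => fun k => if k = 0 then 1 else 0
  | n + 1 => convAdd (iterConv f n) f

/-- μ is the law of an ℕ-valued random variable X satisfying the RDE
    X =_d P + ∑_{i=1}^N (X_i - 1)⁺, with P ~ Poisson(α), N ~ Geom(1/2),
    X_i i.i.d. with law μ, all independent. -/
def SatisfiesRDE (α : ℝ) (μ : ℕ → ℝ≥0∞) : Prop :=
  (∑' k, μ k) = 1 ∧
  ∀ k, μ k = ∑' n, geomHalf n * convAdd (poissonPMF α) (iterConv (shiftLaw μ) n) k

/-- The probability generating function G(s) = E[s^X]. -/
noncomputable def pgf (μ : ℕ → ℝ≥0∞) (s : ℝ) : ℝ := ∑' k, (μ k).toReal * s ^ k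

/-- The mean E[X] = ∑ k · P(X = k), valued in [0,∞]. -/
noncomputable def meanENN (μ : ℕ → ℝ≥0∞) : ℝ≥0∞ := ∑' k : ℕ, (k : ℝ≥0∞) * μ k

/-!
Let `G` and `H` be the generating functions of `X` and of `(X - 1)⁺`. Then `s H + p = G + p s`,
and the RDE gives `G = e^{α(s-1)} ∑ₙ 2^{-(n+1)} Hⁿ = e^{α(s-1)} / (2 - H)`. Eliminating `H`,
`G(s)` is a root of `x² - ((2 - p) s + p) x + s e^{α(s-1)}`, so its discriminant is a square.
The series are first manipulated in `ℝ≥0∞`, where no summability side conditions arise.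
-/

open ENNReal

noncomputable def genFun (f : ℕ → ℝ≥0∞) (t : ℝ≥0∞) : ℝ≥0∞ := ∑' k, f k * t ^ k

theorem ENNReal.tsum_mul_tsum_eq_tsum_sum_range (f g : ℕ → ℝ≥0∞) :
    ((∑' n, f n) * ∑' n, g n) = ∑' n, ∑ k ∈ Finset.range (n + 1), f k * g (n - k) := by
  have hprod : ((∑' n, f n) * ∑' n, g n) = ∑' kl : ℕ × ℕ, f kl.1 * g kl.2 := by
    simp_rw [ENNReal.tsum_prod', ENNReal.tsum_mul_left, ENNReal.tsum_mul_right]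
  simp_rw [hprod, ← Finset.Nat.sum_antidiagonal_eq_sum_range_succ fun k l ↦ f k * g l,
    ← (Finset.HasAntidiagonal.sigmaAntidiagonalEquivProd.tsum_eq fun kl : ℕ × ℕ ↦ f kl.1 * g kl.2),
    ENNReal.tsum_sigma']
  exact tsum_congr fun n ↦ (tsum_fintype _).trans
    (Finset.sum_finset_coe (fun kl : ℕ × ℕ ↦ f kl.1 * g kl.2) _)

theorem genFun_convAdd (f g : ℕ → ℝ≥0∞) (t : ℝ≥0∞) :
    genFun (convAdd f g) t = genFun f t * genFun g t := by
  rw [genFun, genFun, genFun, ENNReal.tsum_mul_tsum_eq_tsum_sum_range]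
  refine tsum_congr fun n ↦ ?_
  rw [convAdd, Finset.sum_mul]
  refine Finset.sum_congr rfl fun k hk ↦ ?_
  rw [mul_mul_mul_comm, ← pow_add, Nat.add_sub_cancel' (Finset.mem_range_succ_iff.mp hk)]

theorem genFun_iterConv (f : ℕ → ℝ≥0∞) (t : ℝ≥0∞) (n : ℕ) :
    genFun (iterConv f n) t = genFun f t ^ n := by
  induction n with
  | zero => simp [genFun, iterConv]
  | succ n ih => rw [iterConv, genFun_convAdd, ih, pow_succ]

theorem genFun_le_one {f : ℕ → ℝ≥0∞} (hf : ∑' k, f k = 1) {t : ℝ≥0∞} (ht : t ≤ 1) :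
    genFun f t ≤ 1 :=
  hf ▸ ENNReal.tsum_le_tsum fun k ↦ mul_le_of_le_one_right' (pow_le_one' ht k)

theorem tsum_shiftLaw (μ : ℕ → ℝ≥0∞) : ∑' k, shiftLaw μ k = ∑' k, μ k := by
  rw [tsum_eq_zero_add' ENNReal.summable, tsum_eq_zero_add' ENNReal.summable (f := μ),
    tsum_eq_zero_add' ENNReal.summable (f := fun k ↦ μ (k + 1))]
  simp only [shiftLaw, add_eq_zero, one_ne_zero, and_false, if_false, if_true, zero_add]
  ring

theorem mul_genFun_shiftLaw_add (μ : ℕ → ℝ≥0∞) (t : ℝ≥0∞) :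
    t * genFun (shiftLaw μ) t + μ 0 = genFun μ t + μ 0 * t := by
  have hμ : genFun μ t = μ 0 + (μ 1 * t + ∑' k, μ (k + 2) * t ^ (k + 2)) := by
    rw [genFun, tsum_eq_zero_add' ENNReal.summable, tsum_eq_zero_add' ENNReal.summable]
    simp
  have hshift : genFun (shiftLaw μ) t = μ 0 + μ 1 + ∑' k, μ (k + 2) * t ^ (k + 1) := by
    rw [genFun, tsum_eq_zero_add' ENNReal.summable]
    simp [shiftLaw]
  rw [hμ, hshift, mul_add, ← ENNReal.tsum_mul_left]
  simp_rw [mul_left_comm t, ← pow_succ']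
  ring

theorem tsum_geomHalf_mul_pow (x : ℝ≥0∞) : ∑' n, geomHalf n * x ^ n = (2 - x)⁻¹ := by
  have h2 : 2 * (1 - 2⁻¹ * x) = 2 - x := by
    rw [ENNReal.mul_sub fun _ _ ↦ ofNat_ne_top, mul_one, ← mul_assoc,
      ENNReal.mul_inv_cancel two_ne_zero ofNat_ne_top, one_mul]
  simp_rw [geomHalf, pow_succ', one_div, mul_assoc, ← mul_pow, ENNReal.tsum_mul_left,
    ENNReal.tsum_geometric]
  rw [← h2, ENNReal.mul_inv (.inl two_ne_zero) (.inl ofNat_ne_top)]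

theorem genFun_poissonPMF {α s : ℝ} (hα : 0 ≤ α) (hs : 0 ≤ s) :
    genFun (poissonPMF α) (ENNReal.ofReal s) = ENNReal.ofReal (Real.exp (α * (s - 1))) := by
  have hterm (k : ℕ) : poissonPMF α k * ENNReal.ofReal s ^ k
      = ENNReal.ofReal (Real.exp (-α) * ((α * s) ^ k / k.factorial)) := by
    rw [poissonPMF, ← ENNReal.ofReal_pow hs, ← ENNReal.ofReal_mul (by positivity)]
    congr 1
    ring
  rw [genFun, tsum_congr hterm, ← ENNReal.ofReal_tsum_of_nonneg (fun k ↦ by positivity)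
    ((Real.summable_pow_div_factorial _).mul_left _), tsum_mul_left,
    (NormedSpace.expSeries_div_hasSum_exp (α * s)).tsum_eq, ← Real.exp_eq_exp_ℝ, ← Real.exp_add]
  ring_nf

theorem SatisfiesRDE.genFun_eq {α : ℝ} {μ : ℕ → ℝ≥0∞} (hμ : SatisfiesRDE α μ) (t : ℝ≥0∞) :
    genFun μ t = genFun (poissonPMF α) t * (2 - genFun (shiftLaw μ) t)⁻¹ := by
  calc genFun μ t
      = ∑' n, ∑' k, geomHalf n * (convAdd (poissonPMF α) (iterConv (shiftLaw μ) n) k * t ^ k) := by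
        rw [genFun, ENNReal.tsum_comm]
        refine tsum_congr fun k ↦ ?_
        rw [hμ.2 k, ← ENNReal.tsum_mul_right]
        exact tsum_congr fun n ↦ mul_assoc _ _ _
    _ = ∑' n, geomHalf n * genFun (convAdd (poissonPMF α) (iterConv (shiftLaw μ) n)) t := by
        simp_rw [ENNReal.tsum_mul_left, genFun]
    _ = genFun (poissonPMF α) t * ∑' n, geomHalf n * genFun (shiftLaw μ) t ^ n := by
        simp_rw [genFun_convAdd, genFun_iterConv, ← ENNReal.tsum_mul_left, mul_left_comm]
    _ = _ := by rw [tsum_geomHalf_mul_pow]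

theorem pgf_eq_toReal_genFun {f : ℕ → ℝ≥0∞} (hf : ∀ k, f k ≠ ∞) {s : ℝ} (hs : 0 ≤ s) :
    pgf f s = (genFun f (ENNReal.ofReal s)).toReal := by
  rw [genFun, ENNReal.tsum_toReal_eq fun k ↦ mul_ne_top (hf k) (pow_ne_top ofReal_ne_top), pgf]
  simp [ENNReal.toReal_ofReal hs]

theorem mul_pgf_shiftLaw_add {μ : ℕ → ℝ≥0∞} (hμ : ∑' k, μ k = 1) {s : ℝ} (hs₀ : 0 ≤ s)
    (hs₁ : s ≤ 1) : s * pgf (shiftLaw μ) s + (μ 0).toReal = pgf μ s + (μ 0).toReal * s := by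
  have hshift : ∑' k, shiftLaw μ k = 1 := (tsum_shiftLaw μ).trans hμ
  have hμ_ne_top : ∀ k, μ k ≠ ∞ := ENNReal.ne_top_of_tsum_ne_top (by simp [hμ])
  have ht : ENNReal.ofReal s ≤ 1 := ENNReal.ofReal_le_one.mpr hs₁
  have hG := ne_top_of_le_ne_top one_ne_top (genFun_le_one hμ ht)
  have hH := ne_top_of_le_ne_top one_ne_top (genFun_le_one hshift ht)
  have := congrArg ENNReal.toReal (mul_genFun_shiftLaw_add μ (ENNReal.ofReal s))
  rwa [toReal_add (mul_ne_top ofReal_ne_top hH) (hμ_ne_top 0),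
    toReal_add hG (mul_ne_top (hμ_ne_top 0) ofReal_ne_top), toReal_mul, toReal_mul,
    toReal_ofReal hs₀,
    ← pgf_eq_toReal_genFun (ENNReal.ne_top_of_tsum_ne_top (by simp [hshift])) hs₀,
    ← pgf_eq_toReal_genFun hμ_ne_top hs₀] at this

theorem SatisfiesRDE.pgf_mul_two_sub {α : ℝ} {μ : ℕ → ℝ≥0∞} (hμ : SatisfiesRDE α μ) (hα : 0 ≤ α)
    {s : ℝ} (hs₀ : 0 ≤ s) (hs₁ : s ≤ 1) :
    pgf μ s * (2 - pgf (shiftLaw μ) s) = Real.exp (α * (s - 1)) := by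
  have hshift : ∑' k, shiftLaw μ k = 1 := (tsum_shiftLaw μ).trans hμ.1
  have hH : genFun (shiftLaw μ) (ENNReal.ofReal s) ≤ 1 :=
    genFun_le_one hshift (ENNReal.ofReal_le_one.mpr hs₁)
  have hH₂ : genFun (shiftLaw μ) (ENNReal.ofReal s) < 2 := hH.trans_lt one_lt_two
  have key : genFun μ (ENNReal.ofReal s) * (2 - genFun (shiftLaw μ) (ENNReal.ofReal s))
      = ENNReal.ofReal (Real.exp (α * (s - 1))) := by
    rw [hμ.genFun_eq, mul_assoc, ENNReal.inv_mul_cancel (tsub_pos_of_lt hH₂).ne'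
      (ENNReal.sub_ne_top ofNat_ne_top), mul_one, genFun_poissonPMF hα hs₀]
  have := congrArg ENNReal.toReal key
  rwa [toReal_mul, toReal_sub_of_le hH₂.le ofNat_ne_top, toReal_ofReal (Real.exp_nonneg _),
    ← pgf_eq_toReal_genFun (ENNReal.ne_top_of_tsum_ne_top (by simp [hμ.1])) hs₀,
    ← pgf_eq_toReal_genFun (ENNReal.ne_top_of_tsum_ne_top (by simp [hshift])) hs₀] at this

theorem discriminant_nonneg_general
    (α : ℝ) (hα0 : 0 < α)
    (μ : ℕ → ℝ≥0∞) (hμ : SatisfiesRDE α μ)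
    (p : ℝ) (hp : p = (μ 0).toReal) :
    ∀ s ∈ Set.Ioc (0 : ℝ) 1,
      0 ≤ ((2 - p) * s + p) ^ 2 - 4 * s * Real.exp (α * (s - 1)) := by
  rintro s ⟨hs₀, hs₁⟩
  have hG := hμ.pgf_mul_two_sub hα0.le hs₀.le hs₁
  have hH := hp ▸ mul_pgf_shiftLaw_add hμ.1 hs₀.le hs₁
  have hroot : 1 * (pgf μ s * pgf μ s) + -((2 - p) * s + p) * pgf μ s
      + s * Real.exp (α * (s - 1)) = 0 := by
    linear_combination -s * hG - pgf μ s * hH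
  calc 0 ≤ (2 * 1 * pgf μ s + -((2 - p) * s + p)) ^ 2 := sq_nonneg _
    _ = discrim 1 (-((2 - p) * s + p)) (s * Real.exp (α * (s - 1))) :=
        (discrim_eq_sq_of_quadratic_eq_zero hroot).symm
    _ = _ := by rw [discrim]; ring

/-- For α ∈ (0,1) and s ∈ (0,1],
((2−p)s + p)² − 4s·exp(α(s−1)) ≥ 0. -/
theorem discriminant_nonneg
    (α : ℝ) (hα0 : 0 < α) (hα1 : α < 1)
    (μ : ℕ → ℝ≥0∞) (hμ : SatisfiesRDE α μ)
    (p : ℝ) (hp : p = (μ 0).toReal) :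
    ∀ s ∈ Set.Ioc (0 : ℝ) 1,
      0 ≤ ((2 - p) * s + p) ^ 2 - 4 * s * Real.exp (α * (s - 1)) :=
  discriminant_nonneg_general α hα0 μ hμ p hp
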